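/- Let v ≠ w be nonadjacent, unlooped twin vertices of a weighted marked graph G with v marked c and w marked u. Then [G] = [(G−w)'] + α(v)β(w)[G−v−w], where (G−w)' is obtained from G−w by unmarking v and changing its weights to α'(v) = α(v)α(w) + β(v)α(w) and β'(v) = β(v)β(w). -/

import Mathlib

/-- The six vertex marks of a multiply marked graph. -/
inductive Mark : Type
  | un | r | c | cr | u | ur
deriving DecidableEq

/-- A (multiply marked) graph: symmetric irreflexive adjacency, loops,
marks, and a number of free loops. -/
structure MGraph (V : Type) [DecidableEq V] : Type where
  adj : V → V → Bool
  adj_symm : ∀ x y, adj x y = adj y x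
  adj_irrefl : ∀ x, adj x x = false
  loop : V → Bool
  mark : V → Mark
  freeLoops : ℕ

namespace MGraph

variable {V : Type} [DecidableEq V]

/-- The mark change at `v` itself: unmarked↔u, r↔ur, c↔cr. -/
def flipV : Mark → Mark
  | .un => .u | .u => .un | .r => .ur | .ur => .r | .c => .cr | .cr => .c

/-- The mark change at neighbors of `v`: unmarked↔r, c↔ur, u↔cr. -/
def flipN : Mark → Mark
  | .un => .r | .r => .un | .c => .ur | .ur => .c | .u => .cr | .cr => .u

/-- The marked local complement `G_cru^v`. -/
def mlc (G : MGraph V) (v : V) : MGraph V where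
  adj x y := if x ≠ y ∧ G.adj v x = true ∧ G.adj v y = true then !(G.adj x y) else G.adj x y
  adj_symm := by
    intro x y
    try dsimp only
    by_cases h : x ≠ y ∧ G.adj v x = true ∧ G.adj v y = true
    · rw [if_pos h, if_pos ⟨h.1.symm, h.2.2, h.2.1⟩, G.adj_symm]
    · rw [if_neg h, if_neg (fun h' => h ⟨h'.1.symm, h'.2.2, h'.2.1⟩), G.adj_symm]
  adj_irrefl := by
    intro x
    try dsimp only
    rw [if_neg (fun h => h.1 rfl), G.adj_irrefl]
  loop := G.loop
  mark x := if x = v then flipV (G.mark x)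
            else if G.adj v x = true then flipN (G.mark x) else G.mark x
  freeLoops := G.freeLoops

end MGraph

/-- Whether a mark contains the letter `r`. -/
def Mark.hasR : Mark → Bool
  | .r => true | .cr => true | .ur => true | _ => false

/-- Whether a mark is `c` or `cr`. -/
def Mark.isC : Mark → Bool
  | .c => true | .cr => true | _ => false

/-- Whether a mark is `u` or `ur`. -/
def Mark.isU : Mark → Bool
  | .u => true | .ur => true | _ => false

/-- GF(2)-nullity of a square matrix. -/
noncomputable def nullity {n : Type} [Fintype n] (M : Matrix n n (ZMod 2)) : ℕ :=
  Fintype.card n - M.rank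

namespace MGraph

variable {V : Type} [DecidableEq V]

/-- The matrix `𝒜(G) + Δ_T` over GF(2): off-diagonal entries record adjacency,
and the diagonal entry at `x` is the loop contribution plus the `Δ_T` entry,
which is `1` iff (`x ∈ T` and the mark of `x` has no `r`) or (`x ∉ T` and it has an `r`). -/
def matT (G : MGraph V) (T : Finset V) : Matrix V V (ZMod 2) :=
  Matrix.of fun x y =>
    if x = y then
      (if G.loop x = true then 1 else 0) +
        (if ((x ∈ T) ↔ (G.mark x).hasR = false) then 1 else 0)
    else if G.adj x y = true then 1 else 0

/-- The vertices whose rows and columns are kept in `𝒜(G)_T`: delete `x` iff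
`x` is marked `c`/`cr` with diagonal entry `0`, or marked `u`/`ur` with diagonal entry `1`. -/
def keep (G : MGraph V) (T : Finset V) (x : V) : Bool :=
  !(((G.mark x).isC && decide (G.matT T x x = 0)) ||
    ((G.mark x).isU && decide (G.matT T x x = 1)))

/-- The matrix `𝒜(G)_T`, the submatrix of `𝒜(G) + Δ_T` on the kept vertices. -/
def subMat (G : MGraph V) (T : Finset V) :
    Matrix {x : V // G.keep T x = true} {x : V // G.keep T x = true} (ZMod 2) :=
  (G.matT T).submatrix Subtype.val Subtype.val

/-- The marked-graph bracket polynomial, evaluated at elements `A`, `B`, `d`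
of a commutative ring. -/
noncomputable def bracket (G : MGraph V) [Fintype V] {R : Type*} [CommRing R]
    (A B d : R) : R :=
  d ^ G.freeLoops *
    ∑ T : Finset V, A ^ (Fintype.card V - T.card) * B ^ T.card * d ^ nullity (G.subMat T)

/-- The weighted marked-graph bracket polynomial with vertex weights `α`, `β`. -/
noncomputable def wbracket (G : MGraph V) [Fintype V] {R : Type*} [CommRing R]
    (d : R) (α β : V → R) : R :=
  d ^ G.freeLoops *
    ∑ T : Finset V, (∏ x ∈ Tᶜ, α x) * (∏ x ∈ T, β x) * d ^ nullity (G.subMat T)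

/-- Deletion of the vertex `v`. -/
def delete (G : MGraph V) (v : V) : MGraph {x : V // x ≠ v} where
  adj x y := G.adj x.val y.val
  adj_symm := fun x y => G.adj_symm x.val y.val
  adj_irrefl := fun x => G.adj_irrefl x.val
  loop x := G.loop x.val
  mark x := G.mark x.val
  freeLoops := G.freeLoops

/-- Change the mark of the vertex `v` to `m`. -/
def setMark (G : MGraph V) (v : V) (m : Mark) : MGraph V :=
  { G with mark := fun x => if x = v then m else G.mark x }

/-- The one-vertex graph with given loop status and mark (and no free loops). -/
def single (l : Bool) (m : Mark) : MGraph Unit where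
  adj _ _ := false
  adj_symm := fun _ _ => rfl
  adj_irrefl := fun _ => rfl
  loop _ := l
  mark _ := m
  freeLoops := 0

end MGraph

/-! Split every `T ⊆ V` as `S ∪ (T ∩ {v, w})` with `v, w ∉ S`. All matrices `𝒜(G)_T`,
`𝒜((G−w)')_{T'}` and `𝒜(G−v−w)_S` that occur are, after relabelling, principal blocks of the
one matrix `𝒜(G) + Δ_{S ∪ {v}}` on `K`, `K ∪ {v}`, `K ∪ {w}` or `K ∪ {v, w}`, where `K` is the
set of vertices outside `{v, w}` kept at `S`. Because `v` and `w` are twins, row `v` minus row `w`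
of the block on `K ∪ {v, w}` is a unit vector, so that block has the nullity of the one on
`K ∪ {w}`; and in `(G−w)'` the unmarked `v` outside `T'` behaves exactly like `w` in `G`. Hence
the four terms of `[G]` for a given `S` add up to
`(α(v)α(w) + β(v)α(w)) d^{n(K ∪ {w})} + β(v)β(w) d^{n(K ∪ {v})} + α(v)β(w) d^{n(K)}`,
which are the corresponding terms of `[(G−w)']` and `α(v)β(w)[G−v−w]`. -/
open Finset Module Matrix

section LinearAlgebra

variable {K : Type*} [Field K] {ι : Type*} [Fintype ι] [DecidableEq ι]

theorem Matrix.apply_eq_zero_of_mulVec_eq_zero_of_row_eq (M : Matrix ι ι K) {i j : ι}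
    (hrow : ∀ l, l ≠ i → M i l = M j l) (hdiag : M i i ≠ M j i) {x : ι → K}
    (hx : M *ᵥ x = 0) : x i = 0 := by
  have hrows : (M *ᵥ x) i - (M *ᵥ x) j = (M i i - M j i) * x i := by
    simp only [mulVec, dotProduct]
    rw [Fintype.sum_eq_add_sum_subtype_ne _ i, Fintype.sum_eq_add_sum_subtype_ne _ i,
      add_sub_add_comm, ← sum_sub_distrib, sub_mul]
    simp [fun l : {l // l ≠ i} => hrow l l.2]
  rw [hx] at hrows
  exact (mul_eq_zero.mp (by simpa using hrows.symm)).resolve_left (sub_ne_zero.mpr hdiag)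

/-- Kernel vectors of `M` vanish at `i`, and kernel vectors of the block without `i` extend by
zero: row `i` of the extension is row `j` of the block. -/
theorem Matrix.finrank_ker_toBlock_ne_of_row_eq (M : Matrix ι ι K) {i j : ι} (hji : j ≠ i)
    (hrow : ∀ l, l ≠ i → M i l = M j l) (hdiag : M i i ≠ M j i) :
    finrank K (LinearMap.ker (M.toBlock (· ≠ i) (· ≠ i)).mulVecLin) =
      finrank K (LinearMap.ker M.mulVecLin) := by
  set N := M.toBlock (· ≠ i) (· ≠ i)
  have hsplit : ∀ (k : ι) (x : ι → K),
      (M *ᵥ x) k = M k i * x i + ∑ l : {l // l ≠ i}, M k l * x l :=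
    fun k x => Fintype.sum_eq_add_sum_subtype_ne _ i
  have hvanish : ∀ x : ι → K, M *ᵥ x = 0 → x i = 0 := fun x =>
    M.apply_eq_zero_of_mulVec_eq_zero_of_row_eq hrow hdiag
  let extend : ({l // l ≠ i} → K) → ι → K := fun y l => if h : l = i then 0 else y ⟨l, h⟩
  have hextend : ∀ y k, (M *ᵥ extend y) k = ∑ l : {l // l ≠ i}, M k l * y l := by
    intro y k
    simp [hsplit, extend, fun l : {l // l ≠ i} => l.2]
  let e : LinearMap.ker M.mulVecLin ≃ₗ[K] LinearMap.ker N.mulVecLin :=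
    { toFun := fun x => ⟨fun l => x.1 l, by
        have hx : M *ᵥ x.1 = 0 := x.2
        funext l
        have hl := (hsplit l x.1).symm.trans (congrFun hx l)
        rw [hvanish x.1 hx, mul_zero, zero_add] at hl
        exact hl⟩
      invFun := fun y => ⟨extend y.1, by
        have hy : N *ᵥ y.1 = 0 := y.2
        change M *ᵥ extend y.1 = 0
        funext k
        rw [Pi.zero_apply, hextend]
        by_cases hk : k = i
        · subst hk
          simp only [fun l : {l // l ≠ k} => hrow l l.2]
          exact congrFun hy ⟨j, hji⟩
        · exact congrFun hy ⟨k, hk⟩⟩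
      map_add' := fun _ _ => rfl
      map_smul' := fun _ _ => rfl
      left_inv := fun x => by
        ext l
        by_cases hl : l = i
        · subst hl
          simpa [extend] using (hvanish x.1 x.2).symm
        · simp [extend, hl]
      right_inv := fun y => by
        ext l
        simp [extend, l.2] }
  exact e.finrank_eq.symm

end LinearAlgebra

theorem nullity_eq_finrank_ker {n : Type} [Fintype n] (M : Matrix n n (ZMod 2)) :
    nullity M = finrank (ZMod 2) (LinearMap.ker M.mulVecLin) := by
  have h := LinearMap.finrank_range_add_finrank_ker M.mulVecLin
  rw [Module.finrank_fintype_fun_eq_card] at h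
  unfold nullity Matrix.rank
  omega

theorem nullity_submatrix_equiv {m n : Type} [Fintype m] [Fintype n]
    (M : Matrix m m (ZMod 2)) (e : n ≃ m) : nullity (M.submatrix e e) = nullity M := by
  rw [nullity, nullity, Matrix.rank_submatrix, Fintype.card_congr e]

theorem nullity_toBlock_eq_of_embedding {W V : Type} [Fintype W] [Fintype V] [DecidableEq V]
    (N : Matrix W W (ZMod 2)) (M : Matrix V V (ZMod 2)) (f : W ↪ V) (p : W → Prop)
    [DecidablePred p] (s : Finset V) (hp : ∀ x, p x ↔ f x ∈ s) (hs : ∀ y ∈ s, ∃ x, f x = y)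
    (hNM : ∀ x y, p x → p y → N x y = M (f x) (f y)) :
    nullity (N.toBlock p p) = nullity (M.toBlock (· ∈ s) (· ∈ s)) := by
  let e : {x // p x} ≃ {y // y ∈ s} := Equiv.ofBijective (fun x => ⟨f x, (hp x).1 x.2⟩)
    ⟨fun x y hxy => Subtype.ext (f.injective (congrArg Subtype.val hxy)), fun y => by
      obtain ⟨x, hx⟩ := hs y.1 y.2
      exact ⟨⟨x, (hp x).2 (hx ▸ y.2)⟩, Subtype.ext hx⟩⟩
  rw [← nullity_submatrix_equiv _ e]
  congr 1
  ext x y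
  exact hNM x y x.2 y.2

theorem nullity_toBlock_insert_of_row_eq {V : Type} [Fintype V] [DecidableEq V]
    (M : Matrix V V (ZMod 2)) (s : Finset V) {i j : V} (hi : i ∉ s) (hj : j ∈ s)
    (hrow : ∀ l ∈ s, M i l = M j l) (hdiag : M i i ≠ M j i) :
    nullity (M.toBlock (· ∈ insert i s) (· ∈ insert i s)) =
      nullity (M.toBlock (· ∈ s) (· ∈ s)) := by
  set N := M.toBlock (· ∈ insert i s) (· ∈ insert i s)
  let i' : {x // x ∈ insert i s} := ⟨i, mem_insert_self i s⟩
  let j' : {x // x ∈ insert i s} := ⟨j, mem_insert_of_mem hj⟩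
  have hji : j' ≠ i' := fun h => hi (Subtype.mk.inj h ▸ hj)
  have hrow' : ∀ l, l ≠ i' → N i' l = N j' l := by
    rintro ⟨l, hl⟩ hli
    exact hrow l ((mem_insert.mp hl).resolve_left fun h => hli (Subtype.ext h))
  rw [nullity_eq_finrank_ker N, ← N.finrank_ker_toBlock_ne_of_row_eq hji hrow' hdiag,
    ← nullity_eq_finrank_ker]
  refine nullity_toBlock_eq_of_embedding _ _ (Function.Embedding.subtype _) _ s ?_ ?_ ?_
  · rintro ⟨x, hx⟩
    constructor
    · exact fun h => (mem_insert.mp hx).resolve_left fun hxi => h (Subtype.ext hxi)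
    · exact fun hxs h => hi (Subtype.mk.inj h ▸ hxs)
  · exact fun y hy => ⟨⟨y, mem_insert_of_mem hy⟩, rfl⟩
  · intro x y _ _; rfl

namespace MGraph

variable {V W : Type} [DecidableEq V] [DecidableEq W]

theorem matT_apply_of_ne (G : MGraph V) (T : Finset V) {x y : V} (h : x ≠ y) :
    G.matT T x y = if G.adj x y = true then 1 else 0 := by
  simp [matT, h]

theorem matT_self_congr (G : MGraph V) (H : MGraph W) {T : Finset V} {T' : Finset W} {x : V}
    {y : W} (hl : G.loop x = H.loop y) (hr : (G.mark x).hasR = (H.mark y).hasR)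
    (hT : x ∈ T ↔ y ∈ T') : G.matT T x x = H.matT T' y y := by
  simp [matT, hl, hr, hT]

theorem keep_congr (G : MGraph V) (H : MGraph W) {T : Finset V} {T' : Finset W} {x : V} {y : W}
    (hm : G.mark x = H.mark y) (hl : G.loop x = H.loop y) (hT : x ∈ T ↔ y ∈ T') :
    G.keep T x = H.keep T' y := by
  simp only [keep, matT_self_congr G H hl (congrArg Mark.hasR hm) hT, hm]

theorem matT_self_of_hasR_eq_false (G : MGraph V) (T : Finset V) {x : V}
    (hl : G.loop x = false) (hr : (G.mark x).hasR = false) :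
    G.matT T x x = if x ∈ T then 1 else 0 := by
  simp [matT, hl, hr]

theorem keep_of_mark_eq_c (G : MGraph V) (T : Finset V) {x : V} (hm : G.mark x = .c)
    (hl : G.loop x = false) : G.keep T x = decide (x ∈ T) := by
  by_cases hx : x ∈ T <;> simp [keep, matT_self_of_hasR_eq_false G T hl (by rw [hm]; rfl), hm, hx,
    Mark.isC, Mark.isU]

theorem keep_of_mark_eq_u (G : MGraph V) (T : Finset V) {x : V} (hm : G.mark x = .u)
    (hl : G.loop x = false) : G.keep T x = decide (x ∉ T) := by
  by_cases hx : x ∈ T <;> simp [keep, matT_self_of_hasR_eq_false G T hl (by rw [hm]; rfl), hm, hx,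
    Mark.isC, Mark.isU]

theorem keep_of_mark_eq_un (G : MGraph V) (T : Finset V) {x : V} (hm : G.mark x = .un) :
    G.keep T x = true := by
  simp [keep, hm, Mark.isC, Mark.isU]

theorem mark_setMark_delete_of_ne (G : MGraph V) {v w : V} (hvw : v ≠ w) (m : Mark)
    {x : {x // x ≠ w}} (hx : x.1 ≠ v) :
    ((G.delete w).setMark ⟨v, hvw⟩ m).mark x = G.mark x.1 :=
  if_neg fun h => hx (congrArg Subtype.val h)

theorem mark_setMark_self (G : MGraph V) (v : V) (m : Mark) : (G.setMark v m).mark v = m :=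
  if_pos rfl

theorem nullity_subMat_eq_of_embedding [Fintype V] [Fintype W] (H : MGraph W) (G : MGraph V)
    (f : W ↪ V) (T' : Finset W) (T s : Finset V) (hadj : ∀ x y, H.adj x y = G.adj (f x) (f y))
    (hkeep : ∀ x, H.keep T' x = true ↔ f x ∈ s) (hs : ∀ y ∈ s, ∃ x, f x = y)
    (hdiag : ∀ x, H.keep T' x = true → H.matT T' x x = G.matT T (f x) (f x)) :
    nullity (H.subMat T') = nullity ((G.matT T).toBlock (· ∈ s) (· ∈ s)) := by
  refine nullity_toBlock_eq_of_embedding _ _ f _ s hkeep hs fun x y hx _ => ?_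
  by_cases hxy : x = y
  · subst hxy
    exact hdiag x hx
  · rw [matT_apply_of_ne _ _ hxy, matT_apply_of_ne _ _ (f.injective.ne hxy), hadj]

theorem adj_swap_swap (G : MGraph V) {v w : V} (hadj : G.adj v w = false)
    (htwin : ∀ x, x ≠ v → x ≠ w → G.adj v x = G.adj w x) (x y : V) :
    G.adj (Equiv.swap v w x) (Equiv.swap v w y) = G.adj x y := by
  have htwin' : ∀ x, x ≠ v → x ≠ w → G.adj x v = G.adj x w := fun x hv hw => by
    rw [G.adj_symm x v, G.adj_symm x w, htwin x hv hw]
  simp only [Equiv.swap_apply_def]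
  split_ifs <;> subst_vars <;> simp_all [G.adj_irrefl] <;> rwa [G.adj_symm]

end MGraph

section SubsetSums

variable {W : Type} [Fintype W] [DecidableEq W]

theorem sum_finset_eq_sum_map_subtype_ne {M : Type*} [AddCommMonoid M] (a : W)
    (F : Finset W → M) :
    ∑ T, F T = ∑ T : Finset {x // x ≠ a}, (F (T.map (Function.Embedding.subtype _)) +
      F (insert a (T.map (Function.Embedding.subtype _)))) := by
  have ha : a ∉ (univ : Finset {x // x ≠ a}).map (Function.Embedding.subtype _) := by simp
  have huniv : (univ : Finset W) = insert a (univ.map (Function.Embedding.subtype (· ≠ a))) := by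
    ext x
    by_cases hx : x = a <;> simp [hx]
  rw [← powerset_univ, huniv, sum_powerset_insert ha, ← sum_add_distrib]
  refine (sum_nbij' (fun T => T.map (Function.Embedding.subtype _)) (fun T => T.subtype (· ≠ a))
    ?_ ?_ ?_ ?_ ?_).symm
  · simp
  · simp
  · intro T _
    ext x
    simp [x.2]
  · intro T hT
    exact subtype_map_of_mem fun x hx => by simpa using mem_powerset.mp hT hx
  · simp

theorem prod_ite_mem_map_subtype_ne {M : Type*} [CommMonoid M] (a : W) (T : Finset {x // x ≠ a})
    (f g : W → M) :
    ∏ x, (if x ∈ T.map (Function.Embedding.subtype _) then f x else g x) =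
      g a * ∏ x : {x // x ≠ a}, if x ∈ T then f x else g x := by
  rw [Fintype.prod_eq_mul_prod_subtype_ne _ a]
  simp [fun x : {x // x ≠ a} => x.2]

theorem prod_ite_mem_insert_map_subtype_ne {M : Type*} [CommMonoid M] (a : W)
    (T : Finset {x // x ≠ a}) (f g : W → M) :
    ∏ x, (if x ∈ insert a (T.map (Function.Embedding.subtype _)) then f x else g x) =
      f a * ∏ x : {x // x ≠ a}, if x ∈ T then f x else g x := by
  rw [Fintype.prod_eq_mul_prod_subtype_ne _ a]
  simp [fun x : {x // x ≠ a} => x.2]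

end SubsetSums

theorem MGraph.wbracket_eq_sum_prod_ite {V : Type} [DecidableEq V] [Fintype V] (G : MGraph V)
    {R : Type*} [CommRing R] (d : R) (α β : V → R) :
    G.wbracket d α β =
      d ^ G.freeLoops * ∑ T, (∏ x, if x ∈ T then β x else α x) * d ^ nullity (G.subMat T) := by
  simp only [wbracket, prod_ite, filter_mem_eq_inter, univ_inter, filter_notMem_eq_sdiff,
    ← compl_eq_univ_sdiff, mul_comm (∏ x ∈ _, β x)]

namespace MGraph

variable {V : Type} [DecidableEq V]

structure IsCUTwinPair (G : MGraph V) (v w : V) : Prop where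
  ne : v ≠ w
  adj_eq_false : G.adj v w = false
  loop_left : G.loop v = false
  loop_right : G.loop w = false
  mark_left : G.mark v = .c
  mark_right : G.mark w = .u
  adj_twin : ∀ x, x ≠ v → x ≠ w → G.adj v x = G.adj w x

variable [Fintype V]

def keptExcept (G : MGraph V) (S : Finset V) (v w : V) : Finset V :=
  univ.filter fun x => x ≠ v ∧ x ≠ w ∧ G.keep S x = true

variable {G : MGraph V} {v w : V}

theorem mem_keptExcept {S : Finset V} {x : V} :
    x ∈ G.keptExcept S v w ↔ x ≠ v ∧ x ≠ w ∧ G.keep S x = true := by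
  simp [keptExcept]

theorem IsCUTwinPair.keep_iff (h : G.IsCUTwinPair v w) {S T : Finset V}
    (hT : ∀ x, x ≠ v → x ≠ w → (x ∈ T ↔ x ∈ S)) (x : V) :
    G.keep T x = true ↔ x = v ∧ v ∈ T ∨ x = w ∧ w ∉ T ∨ x ∈ G.keptExcept S v w := by
  rcases eq_or_ne x v with rfl | hxv
  · simp [keep_of_mark_eq_c G T h.mark_left h.loop_left, mem_keptExcept, h.ne]
  rcases eq_or_ne x w with rfl | hxw
  · simp [keep_of_mark_eq_u G T h.mark_right h.loop_right, mem_keptExcept, hxv]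
  simp [hxv, hxw, mem_keptExcept, keep_congr G G rfl rfl (hT x hxv hxw)]

theorem IsCUTwinPair.nullity_subMat_eq (h : G.IsCUTwinPair v w) {S T : Finset V} (hwS : w ∉ S)
    (hT : ∀ x, x ≠ v → x ≠ w → (x ∈ T ↔ x ∈ S)) (s : Finset V)
    (hs : ∀ x, G.keep T x = true ↔ x ∈ s) :
    nullity (G.subMat T) = nullity ((G.matT (insert v S)).toBlock (· ∈ s) (· ∈ s)) := by
  refine nullity_subMat_eq_of_embedding G G (.refl V) T _ s (fun _ _ => rfl) hs
    (fun y _ => ⟨y, rfl⟩) fun x hx => matT_self_congr G G rfl rfl ?_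
  rcases (h.keep_iff hT x).1 hx with ⟨rfl, hv⟩ | ⟨rfl, hw⟩ | hK
  · simp [hv]
  · simp [hw, hwS, h.ne.symm]
  · obtain ⟨hxv, hxw, -⟩ := mem_keptExcept.1 hK
    simp [hxv, hT x hxv hxw]

theorem IsCUTwinPair.nullity_toBlock_insert (h : G.IsCUTwinPair v w) {S : Finset V}
    (hwS : w ∉ S) :
    nullity ((G.matT (insert v S)).toBlock (· ∈ insert v (insert w (G.keptExcept S v w)))
        (· ∈ insert v (insert w (G.keptExcept S v w)))) =
      nullity ((G.matT (insert v S)).toBlock (· ∈ insert w (G.keptExcept S v w))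
        (· ∈ insert w (G.keptExcept S v w))) := by
  have hww : G.matT (insert v S) w w = 0 := by
    simp [matT_self_of_hasR_eq_false G _ h.loop_right (by rw [h.mark_right]; rfl), h.ne.symm, hwS]
  refine nullity_toBlock_insert_of_row_eq _ _ (by simp [h.ne, mem_keptExcept])
    (mem_insert_self _ _) ?_ ?_
  · intro l hl
    rcases mem_insert.1 hl with rfl | hK
    · rw [hww, matT_apply_of_ne _ _ h.ne, h.adj_eq_false]
      rfl
    · obtain ⟨hlv, hlw, -⟩ := mem_keptExcept.1 hK
      rw [matT_apply_of_ne _ _ hlv.symm, matT_apply_of_ne _ _ hlw.symm, h.adj_twin l hlv hlw]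
  · rw [matT_self_of_hasR_eq_false G _ h.loop_left (by rw [h.mark_left]; rfl),
      matT_apply_of_ne _ _ h.ne.symm, G.adj_symm, h.adj_eq_false]
    simp

theorem IsCUTwinPair.nullity_subMat_of_notMem (h : G.IsCUTwinPair v w) {S : Finset V}
    (hvS : v ∉ S) (hwS : w ∉ S) :
    nullity (G.subMat S) =
      nullity ((G.matT (insert v S)).toBlock (· ∈ insert w (G.keptExcept S v w))
        (· ∈ insert w (G.keptExcept S v w))) :=
  h.nullity_subMat_eq hwS (fun _ _ _ => Iff.rfl) _ fun x => by
    rw [h.keep_iff (fun _ _ _ => Iff.rfl)]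
    simp [hvS, hwS]

theorem IsCUTwinPair.nullity_subMat_insert_right (h : G.IsCUTwinPair v w) {S : Finset V}
    (hvS : v ∉ S) (hwS : w ∉ S) :
    nullity (G.subMat (insert w S)) =
      nullity ((G.matT (insert v S)).toBlock (· ∈ G.keptExcept S v w)
        (· ∈ G.keptExcept S v w)) := by
  have hT : ∀ x, x ≠ v → x ≠ w → (x ∈ insert w S ↔ x ∈ S) := fun x _ hxw => by simp [hxw]
  refine h.nullity_subMat_eq hwS hT _ fun x => ?_
  rw [h.keep_iff hT]
  simp [h.ne, hvS]

theorem IsCUTwinPair.nullity_subMat_insert_left (h : G.IsCUTwinPair v w) {S : Finset V}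
    (hwS : w ∉ S) :
    nullity (G.subMat (insert v S)) =
      nullity ((G.matT (insert v S)).toBlock (· ∈ insert w (G.keptExcept S v w))
        (· ∈ insert w (G.keptExcept S v w))) := by
  have hT : ∀ x, x ≠ v → x ≠ w → (x ∈ insert v S ↔ x ∈ S) := fun x hxv _ => by simp [hxv]
  rw [← h.nullity_toBlock_insert hwS]
  refine h.nullity_subMat_eq hwS hT _ fun x => ?_
  rw [h.keep_iff hT]
  simp [h.ne.symm, hwS]

theorem IsCUTwinPair.nullity_subMat_insert_insert (h : G.IsCUTwinPair v w) {S : Finset V}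
    (hwS : w ∉ S) :
    nullity (G.subMat (insert w (insert v S))) =
      nullity ((G.matT (insert v S)).toBlock (· ∈ insert v (G.keptExcept S v w))
        (· ∈ insert v (G.keptExcept S v w))) := by
  have hT : ∀ x, x ≠ v → x ≠ w → (x ∈ insert w (insert v S) ↔ x ∈ S) := fun x hxv hxw => by
    simp [hxv, hxw]
  refine h.nullity_subMat_eq hwS hT _ fun x => ?_
  rw [h.keep_iff hT]
  simp

/-- In `(G − w)'` with `v ∉ S'`, the unmarked `v` is kept with diagonal `0`, exactly like `w`
in `G`; the twin swap `v ↔ w` relabels one block as the other. -/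
theorem IsCUTwinPair.nullity_subMat_setMark_delete (h : G.IsCUTwinPair v w)
    {S' : Finset {x // x ≠ w}} {S : Finset V} (hS : S'.map (Function.Embedding.subtype _) = S)
    (hvS' : ⟨v, h.ne⟩ ∉ S') :
    nullity (((G.delete w).setMark ⟨v, h.ne⟩ .un).subMat S') =
      nullity ((G.matT (insert v S)).toBlock (· ∈ insert w (G.keptExcept S v w))
        (· ∈ insert w (G.keptExcept S v w))) := by
  set G' := (G.delete w).setMark ⟨v, h.ne⟩ .un
  let f := (Function.Embedding.subtype (· ≠ w)).trans (Equiv.swap v w).toEmbedding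
  have hmem : ∀ x : {x // x ≠ w}, x ∈ S' ↔ x.1 ∈ S := fun x => hS ▸ (mem_map' _).symm
  have hwS : w ∉ S := hS ▸ fun hw => by
    obtain ⟨a, -, ha⟩ := mem_map.1 hw
    exact a.2 ha
  have hf : ∀ x : {x // x ≠ w}, x.1 ≠ v → f x = x.1 := fun x hx =>
    Equiv.swap_apply_of_ne_of_ne hx x.2
  have hfv : f ⟨v, h.ne⟩ = w := Equiv.swap_apply_left v w
  refine nullity_subMat_eq_of_embedding G' G f S' _ _
    (fun x y => (G.adj_swap_swap h.adj_eq_false h.adj_twin x y).symm) (fun x => ?_)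
    (fun y hy => ?_) (fun x _ => ?_)
  · by_cases hx : x.1 = v
    · obtain rfl : x = ⟨v, h.ne⟩ := Subtype.ext hx
      simp [hfv, keep_of_mark_eq_un G' S' (mark_setMark_self _ _ _)]
    · rw [hf x hx, keep_congr G' G (mark_setMark_delete_of_ne G h.ne _ hx) rfl (hmem x)]
      simp [mem_keptExcept, hx, x.2]
  · rcases mem_insert.1 hy with rfl | hK
    · exact ⟨_, hfv⟩
    · obtain ⟨hyv, hyw, -⟩ := mem_keptExcept.1 hK
      exact ⟨⟨y, hyw⟩, hf ⟨y, hyw⟩ hyv⟩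
  · by_cases hx : x.1 = v
    · obtain rfl : x = ⟨v, h.ne⟩ := Subtype.ext hx
      rw [hfv]
      refine matT_self_congr G' G (h.loop_left.trans h.loop_right.symm) ?_ ?_
      · rw [mark_setMark_self, h.mark_right]; rfl
      · simp [hvS', hwS, h.ne.symm]
    · rw [hf x hx]
      exact matT_self_congr G' G rfl (by rw [mark_setMark_delete_of_ne G h.ne _ hx])
        (by simp [hmem, hx])

theorem IsCUTwinPair.nullity_subMat_setMark_delete_insert (h : G.IsCUTwinPair v w)
    {S' : Finset {x // x ≠ w}} {S : Finset V} (hS : S'.map (Function.Embedding.subtype _) = S) :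
    nullity (((G.delete w).setMark ⟨v, h.ne⟩ .un).subMat (insert ⟨v, h.ne⟩ S')) =
      nullity ((G.matT (insert v S)).toBlock (· ∈ insert v (G.keptExcept S v w))
        (· ∈ insert v (G.keptExcept S v w))) := by
  set G' := (G.delete w).setMark ⟨v, h.ne⟩ .un
  have hmem : ∀ x : {x // x ≠ w}, x.1 ≠ v → (x ∈ insert ⟨v, h.ne⟩ S' ↔ x.1 ∈ S) := fun x hx => by
    rw [mem_insert, or_iff_right fun e => hx (congrArg Subtype.val e), ← hS]
    exact (mem_map' _).symm
  refine nullity_subMat_eq_of_embedding G' G (.subtype _) _ _ _ (fun _ _ => rfl) (fun x => ?_)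
    (fun y hy => ?_) (fun x _ => ?_)
  · by_cases hx : x.1 = v
    · obtain rfl : x = ⟨v, h.ne⟩ := Subtype.ext hx
      simp [keep_of_mark_eq_un G' _ (mark_setMark_self _ _ _)]
    · rw [keep_congr G' G (mark_setMark_delete_of_ne G h.ne _ hx) rfl (hmem x hx)]
      simp [mem_keptExcept, hx, x.2]
  · rcases mem_insert.1 hy with rfl | hK
    · exact ⟨⟨y, h.ne⟩, rfl⟩
    · exact ⟨⟨y, (mem_keptExcept.1 hK).2.1⟩, rfl⟩
  · by_cases hx : x.1 = v
    · obtain rfl : x = ⟨v, h.ne⟩ := Subtype.ext hx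
      refine matT_self_congr G' G rfl ?_ (by simp)
      rw [mark_setMark_self]
      change Mark.un.hasR = (G.mark v).hasR
      rw [h.mark_left]
      rfl
    · exact matT_self_congr G' G rfl (by rw [mark_setMark_delete_of_ne G h.ne _ hx]; rfl)
        (by simp [hmem x hx, hx])

theorem nullity_subMat_delete_delete (hvw : v ≠ w)
    {S'' : Finset {x : {x // x ≠ w} // x ≠ ⟨v, hvw⟩}} {S : Finset V}
    (hS : (S''.map (Function.Embedding.subtype _)).map (Function.Embedding.subtype _) = S) :
    nullity (((G.delete w).delete ⟨v, hvw⟩).subMat S'') =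
      nullity ((G.matT (insert v S)).toBlock (· ∈ G.keptExcept S v w)
        (· ∈ G.keptExcept S v w)) := by
  set G'' := (G.delete w).delete ⟨v, hvw⟩
  have hmem : ∀ x : {x : {x // x ≠ w} // x ≠ ⟨v, hvw⟩}, x ∈ S'' ↔ x.1.1 ∈ S := fun x =>
    hS ▸ ((mem_map' _).trans (mem_map' _)).symm
  have hxv : ∀ x : {x : {x // x ≠ w} // x ≠ ⟨v, hvw⟩}, x.1.1 ≠ v := fun x hx =>
    x.2 (Subtype.ext hx)
  refine nullity_subMat_eq_of_embedding G'' G ((Function.Embedding.subtype _).trans (.subtype _))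
    _ _ _ (fun _ _ => rfl) (fun x => ?_) (fun y hy => ?_) (fun x _ => ?_)
  · rw [keep_congr G'' G rfl rfl (hmem x)]
    simp [mem_keptExcept, hxv x, x.1.2]
  · obtain ⟨hyv, hyw, -⟩ := mem_keptExcept.1 hy
    exact ⟨⟨⟨y, hyw⟩, fun h => hyv (congrArg Subtype.val h)⟩, rfl⟩
  · exact matT_self_congr G'' G rfl rfl (by simp [hmem x, hxv x])

end MGraph

/-- let `v ≠ w` be nonadjacent, unlooped twin vertices of a
weighted marked graph `G`, with `v` marked `c` and `w` marked `u`.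
Then `[G] = [(G−w)'] + α(v)β(w)[G−v−w]`, where `(G−w)'` is `G−w` with
`v` unmarked and its weights changed to `α'(v) = α(v)α(w) + β(v)α(w)` and
`β'(v) = β(v)β(w)`. -/
theorem wbracket_twin_cu {V : Type} [DecidableEq V] [Fintype V]
    (G : MGraph V) (v w : V) (hvw : v ≠ w)
    (hadj : G.adj v w = false)
    (hlv : G.loop v = false) (hlw : G.loop w = false)
    (hmv : G.mark v = Mark.c) (hmw : G.mark w = Mark.u)
    (htwin : ∀ x, x ≠ v → x ≠ w → G.adj v x = G.adj w x)
    {R : Type*} [CommRing R] (d : R) (α β : V → R) :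
    G.wbracket d α β =
      ((G.delete w).setMark ⟨v, hvw⟩ Mark.un).wbracket d
        (fun x => if x.val = v then α v * α w + β v * α w else α x.val)
        (fun x => if x.val = v then β v * β w else β x.val) +
      α v * β w *
        ((G.delete w).delete ⟨v, hvw⟩).wbracket d
          (fun x => α x.val.val) (fun x => β x.val.val) := by
  have h : G.IsCUTwinPair v w := ⟨hvw, hadj, hlv, hlw, hmv, hmw, htwin⟩
  simp only [MGraph.wbracket_eq_sum_prod_ite]
  rw [sum_finset_eq_sum_map_subtype_ne w,
    sum_finset_eq_sum_map_subtype_ne (⟨v, hvw⟩ : {x // x ≠ w}),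
    sum_finset_eq_sum_map_subtype_ne (⟨v, hvw⟩ : {x // x ≠ w})]
  change d ^ G.freeLoops * _ = d ^ G.freeLoops * _ + α v * β w * (d ^ G.freeLoops * _)
  rw [mul_left_comm (α v * β w), ← mul_add]
  congr 1
  rw [mul_sum, ← sum_add_distrib]
  refine sum_congr rfl fun S'' _ => ?_
  have hne : ∀ x : {x : {x // x ≠ w} // x ≠ ⟨v, hvw⟩}, x.1.1 ≠ v := fun x hx =>
    x.2 (Subtype.ext hx)
  simp only [prod_ite_mem_map_subtype_ne, prod_ite_mem_insert_map_subtype_ne, hne,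
    ↓reduceIte]
  set S' := S''.map (Function.Embedding.subtype _)
  set S := S'.map (Function.Embedding.subtype _)
  have hvS : v ∉ S := by simp [S, S']
  have hwS : w ∉ S := by simp [S]
  rw [map_insert, Function.Embedding.coe_subtype, h.nullity_subMat_of_notMem hvS hwS,
    h.nullity_subMat_insert_right hvS hwS, h.nullity_subMat_insert_left hwS,
    h.nullity_subMat_insert_insert hwS, h.nullity_subMat_setMark_delete rfl (by simp [S']),
    h.nullity_subMat_setMark_delete_insert rfl, MGraph.nullity_subMat_delete_delete hvw rfl]
  ring
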